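/- arXiv:2009.08643 — 3 statements merged into one kernel-verified Lean document; each statement's English description precedes it below -/
import Mathlib

section
/- Let (X,d) be a complete metric space and T : X → CB(X) an (r,φ,ψ)-Suzuki integral contraction. Suppose (z_n) ⊂ X converges to z ∈ X and z_{n+1} ∈ T z_n for all n ∈ ℕ. Then for every x ∈ X with x ≠ z, ψ(d(z,Tx)) ≤ r · max{∫_0^{d(z,x)} ψ'(t)dt, ∫_0^{d(x,Tx)} ψ'(t)dt}. -/
open MeasureTheory Metric Set

noncomputable def phi (r : ℝ) : ℝ := if r < 1/2 then 1 else 1 - r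

def PsiClass (ψ : ℝ → ℝ) : Prop :=
  (∀ s t : ℝ, 0 ≤ s → 0 ≤ t → ψ (s + t) ≤ ψ s + ψ t) ∧
  (∀ s t : ℝ, 0 ≤ s → s ≤ t → ψ s ≤ ψ t) ∧
  ContinuousOn ψ (Ici 0) ∧
  (∀ t : ℝ, 0 < t → t ≤ ψ t) ∧
  (∀ t : ℝ, 0 ≤ t → (ψ t = 0 ↔ t = 0))

/-- The Lebesgue integral `∫₀^a ψ'(t) dt` of the a.e. derivative of `ψ`. -/
noncomputable def psint (ψ : ℝ → ℝ) (a : ℝ) : ℝ := ∫ t in (0:ℝ)..a, deriv ψ t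

/-- Nonempty closed bounded subset (member of `CB(X)`). -/
def IsCB {X : Type*} [MetricSpace X] (A : Set X) : Prop :=
  A.Nonempty ∧ IsClosed A ∧ Bornology.IsBounded A

/-- `T` is an `(r, φ, ψ)`-Suzuki integral contraction. -/
def SuzukiIntegral {X : Type*} [MetricSpace X] (T : X → Set X) (r : ℝ) (ψ : ℝ → ℝ) : Prop :=
  ∀ x y : X,
    phi r * psint ψ (infDist x (T x)) ≤ ψ (dist x y) →
    ψ (hausdorffDist (T x) (T y)) ≤
      r * max (max (psint ψ (dist x y)) (psint ψ (infDist x (T x))))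
              (max (psint ψ (infDist y (T y)))
                   (psint ψ ((infDist x (T y) + infDist y (T x)) / 2)))

noncomputable def psiStf (ψ : ℝ → ℝ) (hψ : PsiClass ψ) : StieltjesFunction ℝ where
  toFun t := ψ (max t 0)
  mono' := fun s t hst => hψ.2.1 _ _ (le_max_right _ _) (max_le_max hst le_rfl)
  right_continuous' := by
    have hc : Continuous fun t : ℝ => ψ (max t 0) := by
      have hm : Continuous fun t : ℝ => max t 0 := continuous_id.max continuous_const
      exact hψ.2.2.1.comp_continuous hm fun t => mem_Ici.2 (le_max_right _ _)
    exact fun t => hc.continuousWithinAt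

noncomputable def psiG (ψ : ℝ → ℝ) (hψ : PsiClass ψ) : ℝ → ℝ :=
  fun t => ((psiStf ψ hψ).measure.rnDeriv volume t).toReal

lemma psi_zero {ψ : ℝ → ℝ} (hψ : PsiClass ψ) : ψ 0 = 0 :=
  (hψ.2.2.2.2 0 le_rfl).mpr rfl

lemma psi_nonneg {ψ : ℝ → ℝ} (hψ : PsiClass ψ) {t : ℝ} (ht : 0 ≤ t) : 0 ≤ ψ t := by
  have := hψ.2.1 0 t le_rfl ht
  rwa [psi_zero hψ] at this

lemma psiG_nonneg {ψ : ℝ → ℝ} (hψ : PsiClass ψ) (t : ℝ) : 0 ≤ psiG ψ hψ t :=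
  ENNReal.toReal_nonneg

lemma psiG_integrableOn {ψ : ℝ → ℝ} (hψ : PsiClass ψ) (a b : ℝ) :
    IntegrableOn (psiG ψ hψ) (Ioc a b) := by
  apply integrable_toReal_of_lintegral_ne_top
    ((Measure.measurable_rnDeriv _ _).aemeasurable)
  have h1 : ∫⁻ t in Ioc a b, (psiStf ψ hψ).measure.rnDeriv volume t ≤
      (psiStf ψ hψ).measure (Ioc a b) := Measure.setLIntegral_rnDeriv_le _
  rw [(psiStf ψ hψ).measure_Ioc] at h1
  exact ne_top_of_le_ne_top ENNReal.ofReal_ne_top h1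

lemma psiG_intervalIntegrable {ψ : ℝ → ℝ} (hψ : PsiClass ψ) (a b : ℝ) :
    IntervalIntegrable (psiG ψ hψ) volume a b := by
  rw [intervalIntegrable_iff, uIoc]
  exact psiG_integrableOn hψ _ _

lemma psiG_integral_le {ψ : ℝ → ℝ} (hψ : PsiClass ψ) {a b : ℝ} (ha : 0 ≤ a) (hab : a ≤ b) :
    ∫ t in a..b, psiG ψ hψ t ≤ ψ b - ψ a := by
  rw [intervalIntegral.integral_of_le hab]
  have hmeas : AEMeasurable ((psiStf ψ hψ).measure.rnDeriv volume)
      (volume.restrict (Ioc a b)) := (Measure.measurable_rnDeriv _ _).aemeasurable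
  have hfin : ∀ᵐ t ∂(volume.restrict (Ioc a b)),
      (psiStf ψ hψ).measure.rnDeriv volume t < ⊤ :=
    ae_restrict_of_ae (Measure.rnDeriv_lt_top _ _)
  rw [show (∫ t in Ioc a b, psiG ψ hψ t) =
      (∫⁻ t in Ioc a b, (psiStf ψ hψ).measure.rnDeriv volume t).toReal from
    integral_toReal hmeas hfin]
  have h1 : ∫⁻ t in Ioc a b, (psiStf ψ hψ).measure.rnDeriv volume t ≤
      (psiStf ψ hψ).measure (Ioc a b) := Measure.setLIntegral_rnDeriv_le _
  rw [(psiStf ψ hψ).measure_Ioc] at h1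
  calc (∫⁻ t in Ioc a b, (psiStf ψ hψ).measure.rnDeriv volume t).toReal
      ≤ (ENNReal.ofReal ((psiStf ψ hψ) b - (psiStf ψ hψ) a)).toReal :=
        ENNReal.toReal_mono ENNReal.ofReal_ne_top h1
    _ ≤ ψ b - ψ a := by
        rw [ENNReal.toReal_ofReal_eq_iff.mpr]
        · simp only [psiStf]
          rw [max_eq_left (ha.trans hab), max_eq_left ha]
        · simp only [psiStf]
          rw [max_eq_left (ha.trans hab), max_eq_left ha]
          exact sub_nonneg.2 (hψ.2.1 _ _ ha hab)

lemma psint_eq {ψ : ℝ → ℝ} (hψ : PsiClass ψ) {a : ℝ} (ha : 0 ≤ a) :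
    psint ψ a = ∫ t in (0:ℝ)..a, psiG ψ hψ t := by
  unfold psint
  rw [intervalIntegral.integral_of_le ha, intervalIntegral.integral_of_le ha]
  apply setIntegral_congr_ae measurableSet_Ioc
  filter_upwards [(psiStf ψ hψ).ae_hasDerivAt] with t ht hmem
  have heq : (fun s => ψ (max s 0)) =ᶠ[nhds t] ψ := by
    filter_upwards [Ioi_mem_nhds hmem.1] with s hs
    rw [max_eq_left (le_of_lt hs)]
  have : HasDerivAt ψ (psiG ψ hψ t) t := ht.congr_of_eventuallyEq heq.symm
  exact this.deriv

lemma psint_zero (ψ : ℝ → ℝ) : psint ψ 0 = 0 := intervalIntegral.integral_same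

lemma psint_nonneg {ψ : ℝ → ℝ} (hψ : PsiClass ψ) {a : ℝ} (ha : 0 ≤ a) : 0 ≤ psint ψ a := by
  rw [psint_eq hψ ha]
  exact intervalIntegral.integral_nonneg ha (fun t _ => psiG_nonneg hψ t)

lemma psint_mono {ψ : ℝ → ℝ} (hψ : PsiClass ψ) {a b : ℝ} (ha : 0 ≤ a) (hab : a ≤ b) :
    psint ψ a ≤ psint ψ b := by
  rw [psint_eq hψ ha, psint_eq hψ (ha.trans hab),
    ← intervalIntegral.integral_add_adjacent_intervals (psiG_intervalIntegrable hψ 0 a)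
      (psiG_intervalIntegrable hψ a b)]
  have : 0 ≤ ∫ t in a..b, psiG ψ hψ t :=
    intervalIntegral.integral_nonneg hab (fun t _ => psiG_nonneg hψ t)
  linarith

lemma psint_le_psi_add {ψ : ℝ → ℝ} (hψ : PsiClass ψ) {a b : ℝ} (ha : 0 ≤ a) (hab : a ≤ b) :
    psint ψ b ≤ psint ψ a + ψ (b - a) := by
  rw [psint_eq hψ ha, psint_eq hψ (ha.trans hab),
    ← intervalIntegral.integral_add_adjacent_intervals (psiG_intervalIntegrable hψ 0 a)
      (psiG_intervalIntegrable hψ a b)]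
  have h1 : ∫ t in a..b, psiG ψ hψ t ≤ ψ b - ψ a := psiG_integral_le hψ ha hab
  have h2 : ψ b ≤ ψ a + ψ (b - a) := by
    have := hψ.1 a (b - a) ha (by linarith)
    rwa [add_sub_cancel] at this
  linarith

lemma psint_le_psi {ψ : ℝ → ℝ} (hψ : PsiClass ψ) {a : ℝ} (ha : 0 ≤ a) :
    psint ψ a ≤ ψ a := by
  have := psint_le_psi_add hψ le_rfl ha
  rwa [psint_zero, zero_add, sub_zero] at this

lemma psint_le_of_le {ψ : ℝ → ℝ} (hψ : PsiClass ψ) {a a' e : ℝ}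
    (ha : 0 ≤ a) (ha' : 0 ≤ a') (he : 0 ≤ e) (h : a' ≤ a + e) :
    psint ψ a' ≤ psint ψ a + ψ e := by
  calc psint ψ a' ≤ psint ψ (a + e) := psint_mono hψ ha' h
    _ ≤ psint ψ a + ψ (a + e - a) := psint_le_psi_add hψ ha (by linarith)
    _ = psint ψ a + ψ e := by rw [add_sub_cancel_left]

theorem stmt_2 {X : Type*} [MetricSpace X] [CompleteSpace X]
    (T : X → Set X) (hT : ∀ x, IsCB (T x))
    (r : ℝ) (hr : 0 ≤ r) (hr1 : r < 1) (ψ : ℝ → ℝ) (hψ : PsiClass ψ)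
    (hSuz : SuzukiIntegral T r ψ)
    (z : ℕ → X) (zl : X) (hconv : Filter.Tendsto z Filter.atTop (nhds zl))
    (hstep : ∀ n : ℕ, z (n + 1) ∈ T (z n))
    (x : X) (hx : x ≠ zl) :
    ψ (infDist zl (T x)) ≤
      r * max (psint ψ (dist zl x)) (psint ψ (infDist x (T x))) := by
  have hmono := hψ.2.1
  have hsub := hψ.1
  set c := dist zl x with hc_def
  have hc : 0 < c := dist_pos.2 (Ne.symm hx)
  set w := infDist zl (T x) with hw_def
  have hw0 : 0 ≤ w := infDist_nonneg
  set C := psint ψ (infDist x (T x)) with hC_def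
  set K0 := max (psint ψ c) C with hK0_def
  set K := max K0 (psint ψ ((w + c) / 2)) with hK_def
  have hK0nn : 0 ≤ K0 := le_max_of_le_left (psint_nonneg hψ hc.le)
  have hKnn : 0 ≤ K := le_max_of_le_left hK0nn
  -- distances to the limit
  have hε : Filter.Tendsto (fun n => dist (z n) zl) Filter.atTop (nhds 0) :=
    tendsto_iff_dist_tendsto_zero.mp hconv
  have hψcont0 : Filter.Tendsto (fun n => ψ (dist (z n) zl)) Filter.atTop (nhds 0) := by
    have h0 : ContinuousWithinAt ψ (Ici 0) 0 := hψ.2.2.1 0 (by simp)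
    have hins : Filter.Tendsto (fun n => dist (z n) zl) Filter.atTop
        (nhdsWithin 0 (Ici 0)) := by
      rw [tendsto_nhdsWithin_iff]
      exact ⟨hε, Filter.Eventually.of_forall fun n => dist_nonneg⟩
    have := h0.tendsto.comp hins
    simpa [Function.comp_def, psi_zero hψ] using this
  have hψcont1 : Filter.Tendsto (fun n => ψ (dist (z (n + 1)) zl)) Filter.atTop (nhds 0) :=
    hψcont0.comp (Filter.tendsto_add_atTop_nat 1)
  -- the key estimate for large n
  have hEdistTop : ∀ n, EMetric.hausdorffEdist (T (z n)) (T x) ≠ ⊤ := fun n =>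
    hausdorffEdist_ne_top_of_nonempty_of_bounded (hT _).1 (hT x).1 (hT _).2.2 (hT x).2.2
  have key : ∀ n : ℕ, dist (z n) zl < c / 3 → dist (z (n + 1)) zl < c / 3 →
      ψ w ≤ ψ (dist (z (n + 1)) zl) +
        r * (K + (ψ (dist (z n) zl) + ψ (dist (z (n + 1)) zl))) := by
    intro n h1 h2
    set ε := dist (z n) zl with hε_def
    set ε' := dist (z (n + 1)) zl with hε'_def
    have hεnn : 0 ≤ ε := dist_nonneg
    have hε'nn : 0 ≤ ε' := dist_nonneg
    set η := ψ ε + ψ ε' with hη_def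
    have hηnn : 0 ≤ η := add_nonneg (psi_nonneg hψ hεnn) (psi_nonneg hψ hε'nn)
    set a := infDist (z n) (T (z n)) with ha_def
    have hann : 0 ≤ a := infDist_nonneg
    have ha1 : a ≤ ε + ε' := by
      calc a ≤ dist (z n) (z (n + 1)) := infDist_le_dist_of_mem (hstep n)
        _ ≤ dist (z n) zl + dist (z (n + 1)) zl := dist_triangle_right _ _ _
    have hdist_lb : c - ε ≤ dist (z n) x := by
      have := dist_triangle zl (z n) x
      rw [dist_comm zl (z n)] at this
      linarith
    have ha2 : a ≤ dist (z n) x := by linarith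
    -- the Suzuki premise
    have hpre : phi r * psint ψ a ≤ ψ (dist (z n) x) := by
      have h3 : phi r ≤ 1 := by
        unfold phi; split <;> linarith
      calc phi r * psint ψ a ≤ psint ψ a :=
            mul_le_of_le_one_left (psint_nonneg hψ hann) h3
        _ ≤ ψ a := psint_le_psi hψ hann
        _ ≤ ψ (dist (z n) x) := hmono _ _ hann ha2
    have hmain := hSuz (z n) x hpre
    -- bound the max term by K + η
    have hA : psint ψ (dist (z n) x) ≤ K + η := by
      have h4 : dist (z n) x ≤ c + ε := by
        have := dist_triangle (z n) zl x
        linarith [this]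
      calc psint ψ (dist (z n) x) ≤ psint ψ c + ψ ε :=
            psint_le_of_le hψ hc.le dist_nonneg hεnn h4
        _ ≤ K + η := add_le_add
            (le_trans (le_max_left _ _) (le_max_left _ _))
            (by simp [hη_def]; exact psi_nonneg hψ hε'nn)
    have hB : psint ψ a ≤ K + η := by
      calc psint ψ a ≤ ψ a := psint_le_psi hψ hann
        _ ≤ ψ (ε + ε') := hmono _ _ hann ha1
        _ ≤ ψ ε + ψ ε' := hsub _ _ hεnn hε'nn
        _ = η := rfl
        _ ≤ K + η := le_add_of_nonneg_left hKnn
    have hC2 : C ≤ K + η := le_add_of_le_of_nonneg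
      (le_trans (le_max_right _ _) (le_max_left _ _)) hηnn
    have hD : psint ψ ((infDist (z n) (T x) + infDist x (T (z n))) / 2) ≤ K + η := by
      have h5 : infDist (z n) (T x) ≤ w + ε := by
        have := infDist_le_infDist_add_dist (x := z n) (y := zl) (s := T x)
        linarith [this]
      have h6 : infDist x (T (z n)) ≤ c + ε' := by
        calc infDist x (T (z n)) ≤ dist x (z (n + 1)) := infDist_le_dist_of_mem (hstep n)
          _ ≤ dist x zl + dist (z (n + 1)) zl := dist_triangle_right _ _ _
          _ = c + ε' := by rw [dist_comm x zl]
      have h7 : (infDist (z n) (T x) + infDist x (T (z n))) / 2 ≤ (w + c) / 2 + (ε + ε') := by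
        linarith
      calc psint ψ ((infDist (z n) (T x) + infDist x (T (z n))) / 2)
          ≤ psint ψ ((w + c) / 2) + ψ (ε + ε') :=
            psint_le_of_le hψ (by positivity)
              (div_nonneg (add_nonneg infDist_nonneg infDist_nonneg) (by norm_num))
              (add_nonneg hεnn hε'nn) h7
        _ ≤ psint ψ ((w + c) / 2) + η := by
            have := hsub ε ε' hεnn hε'nn; linarith
        _ ≤ K + η := add_le_add (le_max_right _ _) le_rfl
    have hmax : max (max (psint ψ (dist (z n) x)) (psint ψ a))
        (max C (psint ψ ((infDist (z n) (T x) + infDist x (T (z n))) / 2))) ≤ K + η :=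
      max_le (max_le hA hB) (max_le hC2 hD)
    -- assemble
    have hwle : w ≤ ε' + hausdorffDist (T (z n)) (T x) := by
      calc w ≤ infDist (z (n + 1)) (T x) + dist zl (z (n + 1)) :=
            infDist_le_infDist_add_dist
        _ ≤ hausdorffDist (T (z n)) (T x) + ε' := by
            have h8 : infDist (z (n + 1)) (T x) ≤ hausdorffDist (T (z n)) (T x) :=
              infDist_le_hausdorffDist_of_mem (hstep n) (hEdistTop n)
            rw [dist_comm zl (z (n + 1))]
            linarith
        _ = ε' + hausdorffDist (T (z n)) (T x) := by ring
    have hHnn : 0 ≤ hausdorffDist (T (z n)) (T x) := hausdorffDist_nonneg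
    calc ψ w ≤ ψ (ε' + hausdorffDist (T (z n)) (T x)) :=
          hmono _ _ hw0 hwle
      _ ≤ ψ ε' + ψ (hausdorffDist (T (z n)) (T x)) := hsub _ _ hε'nn hHnn
      _ ≤ ψ ε' + r * (K + η) := by
          have h9 := le_trans hmain (mul_le_mul_of_nonneg_left hmax hr)
          linarith
  -- pass to the limit
  have hev : ∀ᶠ n in Filter.atTop, ψ w ≤ ψ (dist (z (n + 1)) zl) +
      r * (K + (ψ (dist (z n) zl) + ψ (dist (z (n + 1)) zl))) := by
    have h1 : ∀ᶠ n in Filter.atTop, dist (z n) zl < c / 3 :=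
      hε.eventually (gt_mem_nhds (by positivity))
    obtain ⟨N, hN⟩ := Filter.eventually_atTop.1 h1
    refine Filter.eventually_atTop.2 ⟨N, fun n hn => key n (hN n hn) (hN (n + 1) (by omega))⟩
  have hlim : Filter.Tendsto (fun n => ψ (dist (z (n + 1)) zl) +
      r * (K + (ψ (dist (z n) zl) + ψ (dist (z (n + 1)) zl)))) Filter.atTop
      (nhds (0 + r * (K + (0 + 0)))) :=
    hψcont1.add (((tendsto_const_nhds (x := K)).add (hψcont0.add hψcont1)).const_mul r)
  have hwK : ψ w ≤ r * K := by
    have := ge_of_tendsto hlim hev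
    simpa using this
  -- endgame
  rcases le_or_gt w c with hwc | hwc
  · have hKeq : K = K0 := by
      rw [hK_def, max_eq_left]
      refine le_trans (psint_mono hψ (by positivity) (by linarith)) (le_max_left _ _)
    rw [hKeq] at hwK
    exact hwK
  · have hstep2 : psint ψ ((w + c) / 2) ≤ ψ w := by
      calc psint ψ ((w + c) / 2) ≤ ψ ((w + c) / 2) := psint_le_psi hψ (by positivity)
        _ ≤ ψ w := hmono _ _ (by positivity) (by linarith)
    have h2 : ψ w ≤ r * max K0 (ψ w) := by
      refine le_trans hwK (mul_le_mul_of_nonneg_left ?_ hr)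
      exact max_le (le_max_left _ _) (le_trans hstep2 (le_max_right _ _))
    rcases max_choice K0 (ψ w) with h3 | h3 <;> rw [h3] at h2
    · exact h2
    · have hψw0 : ψ w ≤ 0 := by nlinarith
      nlinarith [mul_nonneg hr hK0nn]
end

section
/- Let (X,d) be a complete metric space, ψ ∈ Ψ, r ∈ [0,1), and T : X → CB(X) an (r,φ,ψ)-Suzuki integral contraction. Then for any z₀ ∈ X with d(z₀,Tz₀) > 0 and any r̄ ∈ (r,1), there exists a sequence (z_n) in X with z_{n+1} ∈ T z_n and ψ(d(z_n, z_{n+1})) < r̄ⁿ · ψ(d(z₀,z₁)) for all n ≥ 1; in particular (z_n) is a Cauchy sequence. -/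
open MeasureTheory Metric Set

lemma psint_bounds {ψ : ℝ → ℝ} (hψ : PsiClass ψ) {a : ℝ} (ha : 0 ≤ a) :
    0 ≤ psint ψ a ∧ psint ψ a ≤ ψ a := by
  obtain ⟨hsub, hmon, hcont, hge, hiff⟩ := hψ
  have hψ0 : ψ 0 = 0 := (hiff 0 le_rfl).mpr rfl
  set f : ℝ → ℝ := fun t => ψ (max t 0) with hf
  have hmono : Monotone f := fun s t hst =>
    hmon _ _ (le_max_right _ _) (max_le_max hst le_rfl)
  have hcontf : Continuous f :=
    hcont.comp_continuous (continuous_id.max continuous_const)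
      (fun x => mem_Ici.2 (le_max_right _ _))
  set g := hmono.stieltjesFunction with hgdef
  have hg : ∀ x, g x = f x := by
    intro x
    rw [hmono.stieltjesFunction_eq]
    exact rightLim_eq_of_tendsto
      ((hcontf.continuousAt).tendsto.mono_left nhdsWithin_le_nhds)
  set μ := g.measure with hμdef
  have hderiv : ∀ x : ℝ, 0 < x → deriv ψ x = deriv f x := by
    intro x hx
    apply Filter.EventuallyEq.deriv_eq
    filter_upwards [eventually_gt_nhds hx] with y hy
    simp [hf, max_eq_left hy.le]
  have hae : ∀ᵐ x, deriv f x = (μ.rnDeriv volume x).toReal := by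
    filter_upwards [hmono.ae_hasDerivAt] with x hx using hx.deriv
  have h1 : psint ψ a = ∫ t in Ioc (0:ℝ) a, (μ.rnDeriv volume t).toReal := by
    rw [psint, intervalIntegral.integral_of_le ha]
    apply setIntegral_congr_ae measurableSet_Ioc
    filter_upwards [hae] with x hx hmem
    rw [hderiv x hmem.1, hx]
  have hlint : ∫⁻ t in Ioc (0:ℝ) a, μ.rnDeriv volume t ∂volume ≤ μ (Ioc 0 a) :=
    Measure.setLIntegral_rnDeriv_le _
  have hμIoc : μ (Ioc 0 a) = ENNReal.ofReal (ψ a) := by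
    rw [hμdef, StieltjesFunction.measure_Ioc, hg, hg]
    simp [hf, max_eq_left ha, hψ0]
  have h2 : ∫ t in Ioc (0:ℝ) a, (μ.rnDeriv volume t).toReal =
      (∫⁻ t in Ioc (0:ℝ) a, μ.rnDeriv volume t ∂volume).toReal := by
    apply integral_toReal ((Measure.measurable_rnDeriv μ volume).aemeasurable.restrict)
    exact ae_restrict_of_ae (Measure.rnDeriv_lt_top μ volume)
  constructor
  · rw [h1, h2]; exact ENNReal.toReal_nonneg
  · rw [h1, h2]
    calc (∫⁻ t in Ioc (0:ℝ) a, μ.rnDeriv volume t ∂volume).toReal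
        ≤ (μ (Ioc 0 a)).toReal := by
          apply ENNReal.toReal_mono _ hlint
          rw [hμIoc]; exact ENNReal.ofReal_ne_top
      _ = ψ a := by
          rw [hμIoc, ENNReal.toReal_ofReal
            (psi_nonneg ⟨hsub, hmon, hcont, hge, hiff⟩ ha)]

theorem stmt_12 {X : Type*} [MetricSpace X] [CompleteSpace X]
    (T : X → Set X) (hT : ∀ x, IsCB (T x))
    (r : ℝ) (hr : 0 ≤ r) (hr1 : r < 1) (ψ : ℝ → ℝ) (hψ : PsiClass ψ)
    (hSuz : SuzukiIntegral T r ψ)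
    (z₀ : X) (hz₀ : 0 < infDist z₀ (T z₀))
    (rb : ℝ) (hrb : r < rb) (hrb1 : rb < 1) :
    ∃ z : ℕ → X, z 0 = z₀ ∧ (∀ n : ℕ, z (n + 1) ∈ T (z n)) ∧
      (∀ n : ℕ, 1 ≤ n → ψ (dist (z n) (z (n + 1))) < rb ^ n * ψ (dist (z 0) (z 1))) ∧
      CauchySeq z := by
  obtain ⟨hsub, hmon, hcont, hge, hiff⟩ := id hψ
  have hpsiNN : ∀ t : ℝ, 0 ≤ t → 0 ≤ ψ t := fun t ht => psi_nonneg hψ ht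
  have hphi_pos : 0 < phi r := by unfold phi; split <;> linarith
  have hphi_le : phi r ≤ 1 := by unfold phi; split <;> linarith
  -- Key lemma: for y ∈ T x, ψ(infDist y (T y)) ≤ r * ψ(dist x y)
  have keyA : ∀ x y : X, y ∈ T x → ψ (infDist y (T y)) ≤ r * ψ (dist x y) := by
    intro x y hy
    set a := ψ (infDist y (T y)) with hadef
    set b := ψ (dist x y) with hbdef
    have hidx : infDist x (T x) ≤ dist x y := infDist_le_dist_of_mem hy
    have hidxNN : (0:ℝ) ≤ infDist x (T x) := infDist_nonneg
    have hbNN : 0 ≤ b := hpsiNN _ dist_nonneg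
    have haNN : 0 ≤ a := hpsiNN _ infDist_nonneg
    have hx1 : psint ψ (infDist x (T x)) ≤ ψ (infDist x (T x)) := (psint_bounds hψ hidxNN).2
    have hx0 : 0 ≤ psint ψ (infDist x (T x)) := (psint_bounds hψ hidxNN).1
    have hx2 : ψ (infDist x (T x)) ≤ b := hmon _ _ hidxNN hidx
    have hyp : phi r * psint ψ (infDist x (T x)) ≤ b := by nlinarith
    have hcontr := hSuz x y hyp
    have hEdist : EMetric.hausdorffEdist (T x) (T y) ≠ ⊤ :=
      hausdorffEdist_ne_top_of_nonempty_of_bounded (hT x).1 (hT y).1 (hT x).2.2 (hT y).2.2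
    have haH : a ≤ ψ (hausdorffDist (T x) (T y)) :=
      hmon _ _ infDist_nonneg (infDist_le_hausdorffDist_of_mem hy hEdist)
    have t1 : psint ψ (dist x y) ≤ max a b :=
      le_max_of_le_right (psint_bounds hψ dist_nonneg).2
    have t2 : psint ψ (infDist x (T x)) ≤ max a b :=
      le_max_of_le_right (hx1.trans hx2)
    have t3 : psint ψ (infDist y (T y)) ≤ max a b :=
      le_max_of_le_left (psint_bounds hψ infDist_nonneg).2
    have t4 : psint ψ ((infDist x (T y) + infDist y (T x)) / 2) ≤ max a b := by
      have harg0 : (0:ℝ) ≤ (infDist x (T y) + infDist y (T x)) / 2 := by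
        have i1 : (0:ℝ) ≤ infDist x (T y) := infDist_nonneg
        have i2 : (0:ℝ) ≤ infDist y (T x) := infDist_nonneg
        linarith
      refine (psint_bounds hψ harg0).2.trans ?_
      have h5 : infDist y (T x) = 0 := infDist_zero_of_mem hy
      have h6 : infDist x (T y) ≤ infDist y (T y) + dist x y := infDist_le_infDist_add_dist
      have h7 : (infDist x (T y) + infDist y (T x)) / 2 ≤ max (infDist y (T y)) (dist x y) := by
        have l1 := le_max_left (infDist y (T y)) (dist x y)
        have l2 := le_max_right (infDist y (T y)) (dist x y)
        rw [h5]; linarith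
      refine (hmon _ _ harg0 h7).trans ?_
      rcases max_cases (infDist y (T y)) (dist x y) with ⟨h, _⟩ | ⟨h, _⟩ <;> rw [h]
      · exact le_max_left a b
      · exact le_max_right a b
    have hM : ψ (hausdorffDist (T x) (T y)) ≤ r * max a b :=
      hcontr.trans (mul_le_mul_of_nonneg_left
        (max_le (max_le t1 t2) (max_le t3 t4)) hr)
    rcases le_or_gt a b with hab | hab
    · calc a ≤ r * max a b := haH.trans hM
        _ = r * b := by rw [max_eq_right hab]
    · have h8 : a ≤ r * a := haH.trans (by rwa [max_eq_left hab.le] at hM)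
      nlinarith
  -- Step: choice of the next point
  have key : ∀ (x y : X) (c : ℝ), ∃ w : X,
      y ∈ T x → r * ψ (dist x y) < c → w ∈ T y ∧ ψ (dist y w) < c := by
    intro x y c
    by_cases h : y ∈ T x ∧ r * ψ (dist x y) < c
    · obtain ⟨hy, hc⟩ := h
      set p := infDist y (T y) with hp
      have hpNN : (0:ℝ) ≤ p := infDist_nonneg
      have hψp : ψ p < c := lt_of_le_of_lt (keyA x y hy) hc
      have htend : Filter.Tendsto (fun δ : ℝ => ψ (p + δ)) (nhdsWithin 0 (Ioi 0)) (nhds (ψ p)) := by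
        have h1 : Filter.Tendsto (fun δ : ℝ => p + δ) (nhdsWithin 0 (Ioi 0))
            (nhdsWithin p (Ici 0)) := by
          apply tendsto_nhdsWithin_of_tendsto_nhds_of_eventually_within
          · have : Filter.Tendsto (fun δ : ℝ => p + δ) (nhds 0) (nhds (p + 0)) :=
              tendsto_const_nhds.add Filter.tendsto_id
            simpa using this.mono_left nhdsWithin_le_nhds
          · filter_upwards [self_mem_nhdsWithin] with δ hδ
            exact mem_Ici.2 (by have : (0:ℝ) < δ := hδ; linarith)
        exact (hcont p (mem_Ici.2 hpNN)).tendsto.comp h1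
      obtain ⟨δ, hδlt, hδpos⟩ :=
        ((htend.eventually_lt_const hψp).and self_mem_nhdsWithin).exists
      have hδpos' : (0:ℝ) < δ := hδpos
      obtain ⟨w, hw, hdw⟩ := (infDist_lt_iff (hT y).1).1
        (show infDist y (T y) < p + δ by rw [← hp]; linarith)
      exact ⟨w, fun _ _ => ⟨hw, lt_of_le_of_lt (hmon _ _ dist_nonneg hdw.le) hδlt⟩⟩
    · exact ⟨y, fun hy hc => absurd ⟨hy, hc⟩ h⟩
  choose next hnext using key
  obtain ⟨z1, hz1⟩ := (hT z₀).1
  set C := ψ (dist z₀ z1) with hCdef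
  have hd0 : 0 < dist z₀ z1 := lt_of_lt_of_le hz₀ (infDist_le_dist_of_mem hz1)
  have hC0 : 0 < C := lt_of_lt_of_le hd0 (hge _ hd0)
  have hrb0 : 0 < rb := lt_of_le_of_lt hr hrb
  set w : ℕ → X × X := fun n =>
    Nat.rec (z₀, z1) (fun k p => (p.2, next p.1 p.2 (rb ^ (k + 1) * C))) n with hwdef
  have inv : ∀ n, (w n).2 ∈ T (w n).1 ∧ ψ (dist (w n).1 (w n).2) ≤ rb ^ n * C := by
    intro n
    induction n with
    | zero => exact ⟨hz1, by rw [pow_zero, one_mul]; exact le_rfl⟩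
    | succ k ih =>
      have hlt : r * ψ (dist (w k).1 (w k).2) < rb ^ (k + 1) * C := by
        have h1 : r * ψ (dist (w k).1 (w k).2) ≤ r * (rb ^ k * C) :=
          mul_le_mul_of_nonneg_left ih.2 hr
        have h2 : r * (rb ^ k * C) < rb * (rb ^ k * C) :=
          mul_lt_mul_of_pos_right hrb (by positivity)
        calc r * ψ (dist (w k).1 (w k).2) ≤ r * (rb ^ k * C) := h1
          _ < rb * (rb ^ k * C) := h2
          _ = rb ^ (k + 1) * C := by ring
      obtain ⟨hmem, hlt'⟩ := hnext _ _ _ ih.1 hlt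
      exact ⟨hmem, hlt'.le⟩
  have strict : ∀ k, ψ (dist (w (k + 1)).1 (w (k + 1)).2) < rb ^ (k + 1) * C := by
    intro k
    have hlt : r * ψ (dist (w k).1 (w k).2) < rb ^ (k + 1) * C := by
      have h1 : r * ψ (dist (w k).1 (w k).2) ≤ r * (rb ^ k * C) :=
        mul_le_mul_of_nonneg_left (inv k).2 hr
      have h2 : r * (rb ^ k * C) < rb * (rb ^ k * C) :=
        mul_lt_mul_of_pos_right hrb (by positivity)
      calc r * ψ (dist (w k).1 (w k).2) ≤ r * (rb ^ k * C) := h1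
        _ < rb * (rb ^ k * C) := h2
        _ = rb ^ (k + 1) * C := by ring
    exact (hnext _ _ _ (inv k).1 hlt).2
  refine ⟨fun n => (w n).1, rfl, ?_, ?_, ?_⟩
  · intro n
    show (w (n + 1)).1 ∈ T (w n).1
    exact (inv n).1
  · intro n hn
    obtain ⟨m, rfl⟩ : ∃ m, n = m + 1 := ⟨n - 1, (Nat.succ_pred_eq_of_pos hn).symm⟩
    show ψ (dist (w (m + 1)).1 (w (m + 1)).2) < rb ^ (m + 1) * ψ (dist (w 0).1 (w 1).1)
    exact strict m
  · apply cauchySeq_of_le_geometric rb C hrb1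
    intro n
    show dist (w n).1 (w n).2 ≤ C * rb ^ n
    rcases eq_or_lt_of_le (dist_nonneg : (0:ℝ) ≤ dist (w n).1 (w n).2) with h | h
    · rw [← h]; positivity
    · calc dist (w n).1 (w n).2 ≤ ψ (dist (w n).1 (w n).2) := hge _ h
        _ ≤ rb ^ n * C := (inv n).2
        _ = C * rb ^ n := by ring
end

section
/- Let (X,d) be a complete metric space, T : X → CB(X) an (r,φ,ψ)-Suzuki integral contraction with 0 ≤ r < 1/2, and suppose a sequence (z_n) with z_{n+1} ∈ T z_n converges to z. Then ψ(d(z,Tz)) ≤ 2r·∫_0^{d(z,w)} ψ'(t)dt for every w ∈ Tz, and consequently z ∈ Tz. -/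
open MeasureTheory Metric Set

lemma psint_aux {ψ : ℝ → ℝ} (hmono : MonotoneOn ψ (Ici 0)) (hcont : ContinuousOn ψ (Ici 0))
    {a b : ℝ} (ha : 0 ≤ a) (hab : a ≤ b) :
    IntervalIntegrable (deriv ψ) volume a b ∧
    0 ≤ (∫ t in a..b, deriv ψ t) ∧ (∫ t in a..b, deriv ψ t) ≤ ψ b - ψ a := by
  rcases eq_or_lt_of_le hab with rfl | hab'
  · refine ⟨IntervalIntegrable.refl, ?_, ?_⟩ <;> simp [intervalIntegral.integral_same]
  have hb : (0:ℝ) < b := lt_of_le_of_lt ha hab'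
  set g : ℝ → ℝ := fun t => ψ (max t 0) with hg_def
  have hg : Monotone g := fun s t hst =>
    hmono (mem_Ici.2 (le_max_right _ _)) (mem_Ici.2 (le_max_right _ _)) (max_le_max hst le_rfl)
  set μ := hg.stieltjesFunction.measure with hμ_def
  set D : ℝ → ℝ := fun x => (μ.rnDeriv volume x).toReal with hD_def
  have hD_meas : Measurable D := (Measure.measurable_rnDeriv μ volume).ennreal_toReal
  have hae : ∀ᵐ x, HasDerivAt g (D x) x := hg.ae_hasDerivAt
  have heq : deriv ψ =ᶠ[ae (volume.restrict (Ioc a b))] D := by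
    filter_upwards [ae_restrict_of_ae hae, ae_restrict_mem measurableSet_Ioc] with x hx hxm
    have hx0 : (0:ℝ) < x := lt_of_le_of_lt ha hxm.1
    have hev : ψ =ᶠ[nhds x] g := by
      filter_upwards [eventually_gt_nhds hx0] with y hy
      simp [hg_def, max_eq_left hy.le]
    rw [hev.deriv_eq, hx.deriv]
  have hfb : hg.stieltjesFunction b ≤ ψ b := by
    have hbm : b ∈ Ici (0:ℝ) := mem_Ici.2 hb.le
    have h2 : Filter.Tendsto ψ (nhdsWithin b (Ioi b)) (nhds (ψ b)) :=
      (hcont b hbm).mono_left (nhdsWithin_mono b (fun y hy => le_trans hb.le (le_of_lt hy)))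
    refine ge_of_tendsto h2 ?_
    filter_upwards [self_mem_nhdsWithin] with c hc
    have : Function.rightLim g b ≤ g c := hg.rightLim_le hc
    simpa [hg.stieltjesFunction_eq, hg_def, max_eq_left (hb.le.trans (le_of_lt hc))] using this
  have hfa : ψ a ≤ hg.stieltjesFunction a := by
    have : g a ≤ Function.rightLim g a := hg.le_rightLim le_rfl
    simpa [hg.stieltjesFunction_eq, hg_def, max_eq_left ha] using this
  have hμle : μ (Ioc a b) ≤ ENNReal.ofReal (ψ b - ψ a) := by
    rw [hμ_def, StieltjesFunction.measure_Ioc]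
    exact ENNReal.ofReal_le_ofReal (by linarith)
  have hlint : (∫⁻ x in Ioc a b, ENNReal.ofReal (D x)) ≤ μ (Ioc a b) := by
    refine le_trans (lintegral_mono fun x => ?_) (Measure.setLIntegral_rnDeriv_le _)
    exact ENNReal.ofReal_toReal_le
  have hIntD : IntegrableOn D (Ioc a b) := by
    refine ⟨hD_meas.aestronglyMeasurable, ?_⟩
    rw [hasFiniteIntegral_iff_ofReal (Filter.Eventually.of_forall fun x => ENNReal.toReal_nonneg)]
    exact lt_of_le_of_lt (le_trans hlint hμle) ENNReal.ofReal_lt_top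
  have hIntψ : IntegrableOn (deriv ψ) (Ioc a b) := hIntD.congr heq.symm
  have hII : IntervalIntegrable (deriv ψ) volume a b := by
    rw [intervalIntegrable_iff_integrableOn_Ioc_of_le hab]; exact hIntψ
  have hval : (∫ t in a..b, deriv ψ t) = ∫ x in Ioc a b, D x := by
    rw [intervalIntegral.integral_of_le hab]
    exact integral_congr_ae heq
  refine ⟨hII, ?_, ?_⟩
  · rw [hval]
    exact setIntegral_nonneg measurableSet_Ioc fun x _ => ENNReal.toReal_nonneg
  · rw [hval, integral_eq_lintegral_of_nonneg_ae
      (Filter.Eventually.of_forall fun x => ENNReal.toReal_nonneg) hD_meas.aestronglyMeasurable]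
    have h1 : (∫⁻ x in Ioc a b, ENNReal.ofReal (D x)) ≤ ENNReal.ofReal (ψ b - ψ a) :=
      le_trans hlint hμle
    calc (∫⁻ x in Ioc a b, ENNReal.ofReal (D x)).toReal
        ≤ (ENNReal.ofReal (ψ b - ψ a)).toReal := ENNReal.toReal_mono ENNReal.ofReal_ne_top h1
      _ = ψ b - ψ a := ENNReal.toReal_ofReal (by
          have := hmono (mem_Ici.2 ha) (mem_Ici.2 (ha.trans hab)) hab; linarith)

theorem stmt_16 {X : Type*} [MetricSpace X] [CompleteSpace X]
    (T : X → Set X) (hT : ∀ x, IsCB (T x))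
    (r : ℝ) (hr : 0 ≤ r) (hr12 : r < 1/2) (ψ : ℝ → ℝ) (hψ : PsiClass ψ)
    (hSuz : SuzukiIntegral T r ψ)
    (z : ℕ → X) (zl : X) (hstep : ∀ n : ℕ, z (n + 1) ∈ T (z n))
    (hconv : Filter.Tendsto z Filter.atTop (nhds zl)) :
    (∀ w ∈ T zl, ψ (infDist zl (T zl)) ≤ 2 * r * psint ψ (dist zl w)) ∧
    zl ∈ T zl := by
  obtain ⟨hsub, hmono', hcont, hge, hzero⟩ := hψ
  have hmono : MonotoneOn ψ (Ici 0) := fun s hs t _ hst => hmono' s t hs hst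
  have ψ0 : ψ 0 = 0 := (hzero 0 le_rfl).mpr rfl
  have hge' : ∀ t : ℝ, 0 ≤ t → t ≤ ψ t := by
    intro t ht
    rcases eq_or_lt_of_le ht with rfl | h
    · simp [ψ0]
    · exact hge t h
  have ψnn : ∀ t : ℝ, 0 ≤ t → 0 ≤ ψ t := fun t ht => le_trans ht (hge' t ht)
  have hphi : phi r = 1 := if_pos hr12
  have psintF : ∀ a : ℝ, 0 ≤ a → psint ψ a ≤ ψ a := by
    intro a ha
    have := (psint_aux hmono hcont le_rfl ha).2.2
    simpa [psint, ψ0] using this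
  have psintNN : ∀ a : ℝ, 0 ≤ a → 0 ≤ psint ψ a := fun a ha =>
    (psint_aux hmono hcont le_rfl ha).2.1
  have psintSplit : ∀ a b : ℝ, 0 ≤ a → a ≤ b →
      psint ψ b = psint ψ a + ∫ t in a..b, deriv ψ t := by
    intro a b ha hab
    have h1 := (psint_aux hmono hcont le_rfl ha).1
    have h2 := (psint_aux hmono hcont ha hab).1
    rw [psint, psint, ← intervalIntegral.integral_add_adjacent_intervals h1 h2]
  have psintMono : ∀ a b : ℝ, 0 ≤ a → a ≤ b → psint ψ a ≤ psint ψ b := by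
    intro a b ha hab
    rw [psintSplit a b ha hab]
    have := (psint_aux hmono hcont ha hab).2.1; linarith
  have psintSub : ∀ a b : ℝ, 0 ≤ a → a ≤ b → psint ψ b ≤ psint ψ a + (ψ b - ψ a) := by
    intro a b ha hab
    rw [psintSplit a b ha hab]
    have := (psint_aux hmono hcont ha hab).2.2; linarith
  have hfin : ∀ x y : X, EMetric.hausdorffEdist (T x) (T y) ≠ ⊤ := fun x y =>
    hausdorffEdist_ne_top_of_nonempty_of_bounded (hT x).1 (hT y).1 (hT x).2.2 (hT y).2.2
  have hD0nn : 0 ≤ infDist zl (T zl) := infDist_nonneg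
  have part1 : ∀ w ∈ T zl, ψ (infDist zl (T zl)) ≤ 2 * r * psint ψ (dist zl w) := by
    intro w hw
    set δ := dist zl w with hδdef
    have hδ0 : 0 ≤ δ := dist_nonneg
    have hD0δ : infDist zl (T zl) ≤ δ := infDist_le_dist_of_mem hw
    -- "Lemma D": ψ (H (T zl) (T w)) ≤ r * psint ψ δ
    have hH' : ψ (hausdorffDist (T zl) (T w)) ≤ r * psint ψ δ := by
      set H := hausdorffDist (T zl) (T w) with hHdef
      have hHnn : 0 ≤ H := hausdorffDist_nonneg
      have hprem : phi r * psint ψ (infDist zl (T zl)) ≤ ψ (dist zl w) := by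
        rw [hphi, one_mul]
        exact le_trans (psintF _ hD0nn) (hmono' _ _ hD0nn hD0δ)
      have hcon := hSuz zl w hprem
      have hwTzl : infDist w (T zl) = 0 := infDist_zero_of_mem hw
      have ht2 : psint ψ (infDist zl (T zl)) ≤ psint ψ δ := psintMono _ _ hD0nn hD0δ
      have hwTw : infDist w (T w) ≤ H := infDist_le_hausdorffDist_of_mem hw (hfin _ _)
      have ht3 : psint ψ (infDist w (T w)) ≤ ψ H :=
        le_trans (psintMono _ _ infDist_nonneg hwTw) (psintF _ hHnn)
      have ht4 : psint ψ ((infDist zl (T w) + infDist w (T zl)) / 2)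
          ≤ max (psint ψ δ) (ψ H) := by
        have h1 : infDist zl (T w) ≤ δ + H := by
          have := infDist_le_infDist_add_dist (x := zl) (y := w) (s := T w)
          have hd : dist zl w = δ := rfl
          linarith [hwTw]
        have h0 : 0 ≤ (infDist zl (T w) + infDist w (T zl)) / 2 := by
          have h5 : (0:ℝ) ≤ infDist zl (T w) := infDist_nonneg
          have h6 : (0:ℝ) ≤ infDist w (T zl) := infDist_nonneg
          linarith
        have h2 : (infDist zl (T w) + infDist w (T zl)) / 2 ≤ max δ H := by
          rw [hwTzl]
          rcases le_total δ H with h | h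
          · rw [max_eq_right h]; linarith
          · rw [max_eq_left h]; linarith
        calc psint ψ ((infDist zl (T w) + infDist w (T zl)) / 2)
            ≤ psint ψ (max δ H) := psintMono _ _ h0 h2
          _ ≤ max (psint ψ δ) (ψ H) := by
              rcases le_total δ H with h | h
              · rw [max_eq_right h]; exact le_max_of_le_right (psintF _ hHnn)
              · rw [max_eq_left h]; exact le_max_left _ _
      have hcon2 : ψ H ≤ r * max (psint ψ δ) (ψ H) := by
        refine le_trans hcon (mul_le_mul_of_nonneg_left ?_ hr)
        exact max_le (max_le (le_max_left _ _) (le_trans ht2 (le_max_left _ _)))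
          (max_le (le_max_of_le_right ht3) ht4)
      rcases le_total (ψ H) (psint ψ δ) with h | h
      · rwa [max_eq_left h] at hcon2
      · rw [max_eq_right h] at hcon2
        have h1 : ψ H ≤ 0 := by nlinarith
        have h2 : 0 ≤ r * psint ψ δ := mul_nonneg hr (psintNN _ hδ0)
        linarith
    rcases eq_or_lt_of_le hδ0 with hδz | hδpos
    · have hzw : zl = w := by rw [← dist_eq_zero]; exact hδz.symm
      have hzmem : zl ∈ T zl := by rw [show w = zl from hzw.symm] at hw; exact hw
      rw [infDist_zero_of_mem hzmem, ψ0]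
      exact mul_nonneg (by linarith) (psintNN _ hδ0)
    -- main ε-claim
    have claim : ∀ ε : ℝ, 0 < ε → ε ≤ δ / 3 →
        ψ (infDist zl (T zl)) ≤ 2 * r * psint ψ δ + (ψ ε + r * ψ (3 * ε)) := by
      intro ε hε hεδ
      obtain ⟨N, hN⟩ := (Metric.tendsto_atTop.1 hconv) ε hε
      have hNd : dist (z N) zl < ε := hN N le_rfl
      have hN1d : dist (z (N + 1)) zl < ε := hN (N + 1) (Nat.le_succ N)
      set H := hausdorffDist (T (z N)) (T w) with hHdef
      have hHnn : 0 ≤ H := hausdorffDist_nonneg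
      have hzN1 : z (N + 1) ∈ T (z N) := hstep N
      have hstep2 : dist (z N) (z (N + 1)) ≤ 2 * ε := by
        have h := dist_triangle (z N) zl (z (N + 1))
        have h2 : dist zl (z (N + 1)) = dist (z (N + 1)) zl := dist_comm _ _
        linarith
      have hiN : infDist (z N) (T (z N)) ≤ 2 * ε :=
        le_trans (infDist_le_dist_of_mem hzN1) hstep2
      have hiNnn : 0 ≤ infDist (z N) (T (z N)) := infDist_nonneg
      have hdNw : dist (z N) w ≤ δ + ε := by
        have h := dist_triangle (z N) zl w
        have h2 : dist (z N) zl < ε := hNd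
        linarith
      have hdNw' : 2 * ε ≤ dist (z N) w := by
        have h := dist_triangle zl (z N) w
        have h2 : dist zl (z N) = dist (z N) zl := dist_comm _ _
        linarith
      have hprem : phi r * psint ψ (infDist (z N) (T (z N))) ≤ ψ (dist (z N) w) := by
        rw [hphi, one_mul]
        exact le_trans (psintF _ hiNnn) (hmono' _ _ hiNnn (by linarith))
      have hcon := hSuz (z N) w hprem
      have hP3 : psint ψ (dist (z N) w) ≤ psint ψ (δ + 3 * ε) :=
        psintMono _ _ dist_nonneg (by linarith)
      have ht2 : psint ψ (infDist (z N) (T (z N))) ≤ psint ψ (δ + 3 * ε) :=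
        psintMono _ _ hiNnn (by linarith)
      have hwTw : infDist w (T w) ≤ hausdorffDist (T zl) (T w) :=
        infDist_le_hausdorffDist_of_mem hw (hfin _ _)
      have hH'nn : 0 ≤ hausdorffDist (T zl) (T w) := hausdorffDist_nonneg
      have ht3 : psint ψ (infDist w (T w)) ≤ psint ψ (δ + 3 * ε) := by
        have h1 : psint ψ (infDist w (T w)) ≤ ψ (hausdorffDist (T zl) (T w)) :=
          le_trans (psintMono _ _ infDist_nonneg hwTw) (psintF _ hH'nn)
        have h3 : r * psint ψ δ ≤ psint ψ δ := by nlinarith [psintNN δ hδ0]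
        exact le_trans h1 (le_trans hH' (le_trans h3 (psintMono _ _ hδ0 (by linarith))))
      have ht4 : psint ψ ((infDist (z N) (T w) + infDist w (T (z N))) / 2)
          ≤ max (psint ψ (δ + 3 * ε)) (ψ H) := by
        have h1 : infDist w (T (z N)) ≤ δ + ε := by
          have ha := infDist_le_dist_of_mem (x := w) hzN1
          have hb := dist_triangle w zl (z (N + 1))
          have hc : dist w zl = δ := dist_comm w zl
          have hd : dist zl (z (N + 1)) = dist (z (N + 1)) zl := dist_comm _ _
          linarith
        have h2 : infDist (z N) (T w) ≤ 2 * ε + H := by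
          have ha := infDist_le_infDist_add_dist (x := z N) (y := z (N + 1)) (s := T w)
          have hb := infDist_le_hausdorffDist_of_mem hzN1 (hfin (z N) w)
          have hc : dist (z N) (z (N + 1)) ≤ 2 * ε := hstep2
          linarith
        have h0 : 0 ≤ (infDist (z N) (T w) + infDist w (T (z N))) / 2 := by
          have h5 : (0:ℝ) ≤ infDist (z N) (T w) := infDist_nonneg
          have h6 : (0:ℝ) ≤ infDist w (T (z N)) := infDist_nonneg
          linarith
        have harg : (infDist (z N) (T w) + infDist w (T (z N))) / 2 ≤ max (δ + 3 * ε) H := by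
          rcases le_total (δ + 3 * ε) H with h | h
          · rw [max_eq_right h]; linarith
          · rw [max_eq_left h]; linarith
        calc psint ψ ((infDist (z N) (T w) + infDist w (T (z N))) / 2)
            ≤ psint ψ (max (δ + 3 * ε) H) := psintMono _ _ h0 harg
          _ ≤ max (psint ψ (δ + 3 * ε)) (ψ H) := by
              rcases le_total (δ + 3 * ε) H with h | h
              · rw [max_eq_right h]; exact le_max_of_le_right (psintF _ hHnn)
              · rw [max_eq_left h]; exact le_max_left _ _
      have hcon2 : ψ H ≤ r * max (psint ψ (δ + 3 * ε)) (ψ H) := by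
        refine le_trans hcon (mul_le_mul_of_nonneg_left ?_ hr)
        exact max_le (max_le (le_trans hP3 (le_max_left _ _)) (le_trans ht2 (le_max_left _ _)))
          (max_le (le_trans ht3 (le_max_left _ _)) ht4)
      have hHb : ψ H ≤ r * psint ψ (δ + 3 * ε) := by
        rcases le_total (ψ H) (psint ψ (δ + 3 * ε)) with h | h
        · rwa [max_eq_left h] at hcon2
        · rw [max_eq_right h] at hcon2
          have h1 : ψ H ≤ 0 := by nlinarith
          have h2 : 0 ≤ r * psint ψ (δ + 3 * ε) := mul_nonneg hr (psintNN _ (by linarith))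
          linarith
      have hA : infDist zl (T zl) ≤ ε + H + hausdorffDist (T zl) (T w) := by
        have h1 : infDist zl (T zl) ≤ infDist zl (T w) + hausdorffDist (T w) (T zl) :=
          infDist_le_infDist_add_hausdorffDist (hfin _ _)
        have h2 : infDist zl (T w) ≤ infDist (z (N + 1)) (T w) + dist zl (z (N + 1)) :=
          infDist_le_infDist_add_dist
        have h3 : infDist (z (N + 1)) (T w) ≤ H := infDist_le_hausdorffDist_of_mem hzN1 (hfin _ _)
        have h4 : hausdorffDist (T w) (T zl) = hausdorffDist (T zl) (T w) := hausdorffDist_comm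
        have h5 : dist zl (z (N + 1)) = dist (z (N + 1)) zl := dist_comm _ _
        linarith
      have hψA : ψ (infDist zl (T zl)) ≤ ψ ε + ψ H + ψ (hausdorffDist (T zl) (T w)) := by
        have h1 : ψ (infDist zl (T zl)) ≤ ψ (ε + (H + hausdorffDist (T zl) (T w))) :=
          hmono' _ _ hD0nn (by linarith)
        have h2 : ψ (ε + (H + hausdorffDist (T zl) (T w)))
            ≤ ψ ε + ψ (H + hausdorffDist (T zl) (T w)) := hsub _ _ hε.le (by linarith)
        have h3 : ψ (H + hausdorffDist (T zl) (T w)) ≤ ψ H + ψ (hausdorffDist (T zl) (T w)) :=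
          hsub _ _ hHnn hH'nn
        linarith
      have hsplit : psint ψ (δ + 3 * ε) ≤ psint ψ δ + (ψ (δ + 3 * ε) - ψ δ) :=
        psintSub _ _ hδ0 (by linarith)
      have hsubd : ψ (δ + 3 * ε) ≤ ψ δ + ψ (3 * ε) := hsub _ _ hδ0 (by linarith)
      have hr3 : r * psint ψ (δ + 3 * ε) ≤ r * (psint ψ δ + ψ (3 * ε)) :=
        mul_le_mul_of_nonneg_left (by linarith) hr
      have hHb2 : ψ H ≤ r * psint ψ δ + r * ψ (3 * ε) := by
        have := le_trans hHb hr3; linarith [this]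
      linarith [hψA, hHb2, hH']
    -- take ε → 0
    have hcont0 : Filter.Tendsto ψ (nhdsWithin 0 (Ioi 0)) (nhds 0) := by
      have h := hcont 0 (mem_Ici.2 le_rfl)
      have h2 : Filter.Tendsto ψ (nhdsWithin 0 (Ici 0)) (nhds (ψ 0)) := h
      rw [ψ0] at h2
      exact h2.mono_left (nhdsWithin_mono _ Ioi_subset_Ici_self)
    have h3map : Filter.Tendsto (fun ε : ℝ => 3 * ε)
        (nhdsWithin 0 (Ioi 0)) (nhdsWithin 0 (Ioi 0)) := by
      apply tendsto_nhdsWithin_of_tendsto_nhds_of_eventually_within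
      · have h : Filter.Tendsto (fun ε : ℝ => 3 * ε) (nhds 0) (nhds 0) := by
          have h0 : Filter.Tendsto (fun x : ℝ => x) (nhds (0:ℝ)) (nhds (0:ℝ)) := Filter.tendsto_id
          simpa using h0.const_mul (3:ℝ)
        exact h.mono_left nhdsWithin_le_nhds
      · filter_upwards [self_mem_nhdsWithin] with x hx
        exact mul_pos (by norm_num : (0:ℝ) < 3) hx
    have hT2 : Filter.Tendsto (fun ε : ℝ => 2 * r * psint ψ δ + (ψ ε + r * ψ (3 * ε)))
        (nhdsWithin 0 (Ioi 0)) (nhds (2 * r * psint ψ δ + (0 + r * 0))) :=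
      tendsto_const_nhds.add (hcont0.add ((hcont0.comp h3map).const_mul r))
    have hev : ∀ᶠ ε in nhdsWithin (0:ℝ) (Ioi 0),
        ψ (infDist zl (T zl)) ≤ 2 * r * psint ψ δ + (ψ ε + r * ψ (3 * ε)) := by
      have hmem : Ioc (0:ℝ) (δ / 3) ∈ nhdsWithin (0:ℝ) (Ioi 0) :=
        Ioc_mem_nhdsGT_of_mem ⟨le_rfl, by linarith⟩
      filter_upwards [hmem] with ε hε
      exact claim ε hε.1 hε.2
    have := ge_of_tendsto hT2 hev
    linarith [this]
  -- part 2
  have key : ∀ η : ℝ, 0 < η →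
      ψ (infDist zl (T zl)) ≤ 2 * r * (ψ (infDist zl (T zl)) + ψ η) := by
    intro η hη
    obtain ⟨w, hw, hwd⟩ := (infDist_lt_iff (hT zl).1).1
      (by linarith : infDist zl (T zl) < infDist zl (T zl) + η)
    calc ψ (infDist zl (T zl)) ≤ 2 * r * psint ψ (dist zl w) := part1 w hw
      _ ≤ 2 * r * ψ (dist zl w) :=
          mul_le_mul_of_nonneg_left (psintF _ dist_nonneg) (by linarith)
      _ ≤ 2 * r * (ψ (infDist zl (T zl)) + ψ η) := by
          refine mul_le_mul_of_nonneg_left ?_ (by linarith)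
          calc ψ (dist zl w) ≤ ψ (infDist zl (T zl) + η) := hmono' _ _ dist_nonneg hwd.le
            _ ≤ ψ (infDist zl (T zl)) + ψ η := hsub _ _ hD0nn hη.le
  have hcont0 : Filter.Tendsto ψ (nhdsWithin 0 (Ioi 0)) (nhds 0) := by
    have h : Filter.Tendsto ψ (nhdsWithin 0 (Ici 0)) (nhds (ψ 0)) := hcont 0 (mem_Ici.2 le_rfl)
    rw [ψ0] at h
    exact h.mono_left (nhdsWithin_mono _ Ioi_subset_Ici_self)
  have hT3 : Filter.Tendsto (fun η : ℝ => 2 * r * (ψ (infDist zl (T zl)) + ψ η))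
      (nhdsWithin 0 (Ioi 0)) (nhds (2 * r * (ψ (infDist zl (T zl)) + 0))) :=
    (tendsto_const_nhds.add hcont0).const_mul _
  have hev : ∀ᶠ η in nhdsWithin (0:ℝ) (Ioi 0),
      ψ (infDist zl (T zl)) ≤ 2 * r * (ψ (infDist zl (T zl)) + ψ η) := by
    filter_upwards [self_mem_nhdsWithin] with η hη
    exact key η hη
  have hψD : ψ (infDist zl (T zl)) ≤ 2 * r * ψ (infDist zl (T zl)) := by
    have := ge_of_tendsto hT3 hev
    linarith [this]
  have hψD0 : ψ (infDist zl (T zl)) = 0 := by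
    have hnn : 0 ≤ ψ (infDist zl (T zl)) := ψnn _ hD0nn
    nlinarith
  have hD0 : infDist zl (T zl) = 0 := (hzero _ hD0nn).1 hψD0
  exact ⟨part1, ((hT zl).2.1.mem_iff_infDist_zero (hT zl).1).2 hD0⟩
end
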